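/- Let X be a complex Hilbert space with unit ball B, α ∈ [0,1), and A : X × X → X a bounded symmetric bilinear operator with ‖A‖ ≤ (1−α)/(4−2α). Then f(z) = z + A(z,z) is a biholomorphic convex mapping of order α on B. -/

import Mathlib

/-! `Df(z) = I + T_z` with `T_z = A(z, ·) + A(·, z)` and `D²f(z)(x, x) = 2A(x, x)`. Since
`t := 2‖A‖‖z‖ < 1`, a Neumann series inverts `Df(z)` with `‖Df(z)⁻¹‖ ≤ 1/(1 - t)`, whence
`|Re⟨Df(z)⁻¹D²f(z)(x, x), z⟩| ≤ t/(1 - t) ‖x‖²`. The bound on `‖A‖` is exactly what makes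
`t(2 - α) < 1 - α`, i.e. `t/(1 - t) < 1 - α`, for `‖z‖ < 1`. -/

/-- `f ∈ K(B,α)`: `f` is a biholomorphic convex mapping of order `α` on the unit ball:
`f` is holomorphic and locally biholomorphic on `B` with `f(0)=0`, `Df(0)=I`, and
`‖x‖² − Re⟨Df(z)⁻¹D²f(z)(x,x), z⟩ > α‖x‖²` whenever `z ∈ B \ {0}`, `x ≠ 0`, `Re⟨x,z⟩ = 0`. -/
def IsConvexMappingOfOrder {X : Type*} [NormedAddCommGroup X] [InnerProductSpace ℂ X]
    [CompleteSpace X] (f : X → X) (α : ℝ) : Prop :=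
  (∀ z ∈ Metric.ball (0 : X) 1, DifferentiableAt ℂ f z) ∧
  f 0 = 0 ∧ fderiv ℂ f 0 = ContinuousLinearMap.id ℂ X ∧
  (∀ z ∈ Metric.ball (0 : X) 1, ∃ g : X →L[ℂ] X,
      (fderiv ℂ f z).comp g = ContinuousLinearMap.id ℂ X ∧
      g.comp (fderiv ℂ f z) = ContinuousLinearMap.id ℂ X) ∧
  ∀ z ∈ Metric.ball (0 : X) 1, z ≠ 0 → ∀ x : X, x ≠ 0 →
    (inner ℂ x z : ℂ).re = 0 →
    ∀ g : X →L[ℂ] X,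
      (fderiv ℂ f z).comp g = ContinuousLinearMap.id ℂ X →
      g.comp (fderiv ℂ f z) = ContinuousLinearMap.id ℂ X →
      α * ‖x‖ ^ 2 < ‖x‖ ^ 2 - (inner ℂ (g (fderiv ℂ (fderiv ℂ f) z x x)) z : ℂ).re

namespace ContinuousLinearMap

variable {𝕜 E : Type*} [NontriviallyNormedField 𝕜] [NormedAddCommGroup E] [NormedSpace 𝕜 E]

theorem hasFDerivAt_add_apply_self (A : E →L[𝕜] E →L[𝕜] E) (z : E) :
    HasFDerivAt (fun z => z + A z z) (ContinuousLinearMap.id 𝕜 E + (A + A.flip) z) z :=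
  (hasFDerivAt_id z).add (A.hasFDerivAt.clm_apply (hasFDerivAt_id z))

theorem fderiv_fderiv_add_apply_self (A : E →L[𝕜] E →L[𝕜] E) (z : E) :
    fderiv 𝕜 (fderiv 𝕜 fun z => z + A z z) z = A + A.flip := by
  have hfd : fderiv 𝕜 (fun z => z + A z z) =
      fun w => ContinuousLinearMap.id 𝕜 E + (A + A.flip) w :=
    funext fun w => (A.hasFDerivAt_add_apply_self w).fderiv
  rw [hfd, fderiv_const_add, ContinuousLinearMap.fderiv]

theorem norm_add_flip_le (A : E →L[𝕜] E →L[𝕜] E) : ‖A + A.flip‖ ≤ 2 * ‖A‖ := by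
  simpa [opNorm_flip, two_mul] using norm_add_le A A.flip

theorem norm_add_flip_apply_le (A : E →L[𝕜] E →L[𝕜] E) (z : E) :
    ‖(A + A.flip) z‖ ≤ 2 * ‖A‖ * ‖z‖ :=
  ((A + A.flip).le_opNorm z).trans (by gcongr; exact A.norm_add_flip_le)

theorem norm_add_flip_apply_self_le (A : E →L[𝕜] E →L[𝕜] E) (x : E) :
    ‖(A + A.flip) x x‖ ≤ 2 * ‖A‖ * ‖x‖ ^ 2 :=
  calc ‖(A + A.flip) x x‖ ≤ ‖(A + A.flip) x‖ * ‖x‖ := le_opNorm _ x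
    _ ≤ 2 * ‖A‖ * ‖x‖ * ‖x‖ := by gcongr; exact A.norm_add_flip_apply_le x
    _ = 2 * ‖A‖ * ‖x‖ ^ 2 := by ring

theorem exists_inverse_id_add [CompleteSpace E] {T : E →L[𝕜] E} (hT : ‖T‖ < 1) :
    ∃ g : E →L[𝕜] E, (ContinuousLinearMap.id 𝕜 E + T).comp g = ContinuousLinearMap.id 𝕜 E ∧
      g.comp (ContinuousLinearMap.id 𝕜 E + T) = ContinuousLinearMap.id 𝕜 E := by
  obtain ⟨u, hu⟩ := isUnit_one_sub_of_norm_lt_one (R := E →L[𝕜] E) (x := -T) (by rwa [norm_neg])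
  rw [sub_neg_eq_add] at hu
  exact ⟨↑u⁻¹, by rw [← one_def, ← hu]; exact u.mul_inv, by rw [← one_def, ← hu]; exact u.inv_mul⟩

theorem norm_mul_one_sub_le_of_comp_id_add {T g : E →L[𝕜] E}
    (hg : g.comp (ContinuousLinearMap.id 𝕜 E + T) = ContinuousLinearMap.id 𝕜 E) :
    ‖g‖ * (1 - ‖T‖) ≤ 1 := by
  have hg' : g = ContinuousLinearMap.id 𝕜 E - g.comp T := by
    rw [← hg, comp_add, comp_id]; abel
  have : ‖g‖ ≤ 1 + ‖g‖ * ‖T‖ :=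
    calc ‖g‖ = ‖ContinuousLinearMap.id 𝕜 E - g.comp T‖ := by rw [← hg']
      _ ≤ ‖ContinuousLinearMap.id 𝕜 E‖ + ‖g.comp T‖ := norm_sub_le _ _
      _ ≤ 1 + ‖g‖ * ‖T‖ := add_le_add norm_id_le (opNorm_comp_le g T)
  linarith

end ContinuousLinearMap

theorem mul_lt_one_sub_of_mul_one_sub_le {G s α : ℝ} (hG : 0 ≤ G) (hα : α < 1)
    (hGs : G * (1 - s) ≤ 1) (hs : s * (2 - α) < 1 - α) : G * s < 1 - α := by
  rcases le_or_gt s 0 with hs0 | hs0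
  · nlinarith
  have h1s : 0 < 1 - s := by nlinarith
  refine lt_of_mul_lt_mul_right ?_ h1s.le
  nlinarith

theorem stmt_7_general {X : Type*} [NormedAddCommGroup X] [InnerProductSpace ℂ X] [CompleteSpace X]
    (α : ℝ) (hα1 : α < 1)
    (A : X →L[ℂ] X →L[ℂ] X)
    (hA : ‖A‖ ≤ (1 - α) / (4 - 2 * α)) :
    IsConvexMappingOfOrder (fun z : X => z + A z z) α := by
  have hfd z := (A.hasFDerivAt_add_apply_self z).fderiv
  have hsmall : ∀ z ∈ Metric.ball (0 : X) 1, 2 * ‖A‖ * ‖z‖ * (2 - α) < 1 - α := by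
    intro z hz
    rw [mem_ball_zero_iff] at hz
    rw [le_div_iff₀ (by linarith)] at hA
    nlinarith [norm_nonneg z]
  refine ⟨fun z _ => (A.hasFDerivAt_add_apply_self z).differentiableAt, by simp, by simp [hfd],
    fun z hz => ?_, fun z hz _ x _ _ g _ hg => ?_⟩
  · rw [hfd]
    refine ContinuousLinearMap.exists_inverse_id_add ((A.norm_add_flip_apply_le z).trans_lt ?_)
    nlinarith [hsmall z hz]
  rw [A.fderiv_fderiv_add_apply_self]
  rw [hfd] at hg
  have hgs : ‖g‖ * (2 * ‖A‖ * ‖z‖) < 1 - α :=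
    mul_lt_one_sub_of_mul_one_sub_le (norm_nonneg g) hα1
      ((ContinuousLinearMap.norm_mul_one_sub_le_of_comp_id_add hg).trans'
        (by gcongr; exact A.norm_add_flip_apply_le z))
      (hsmall z hz)
  have hx2 : 0 < ‖x‖ ^ 2 := by positivity
  suffices (inner ℂ (g ((A + A.flip) x x)) z).re < (1 - α) * ‖x‖ ^ 2 by linarith
  calc (inner ℂ (g ((A + A.flip) x x)) z).re
      ≤ ‖g ((A + A.flip) x x)‖ * ‖z‖ := re_inner_le_norm (𝕜 := ℂ) _ _
    _ ≤ ‖g‖ * (2 * ‖A‖ * ‖x‖ ^ 2) * ‖z‖ := by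
        gcongr; exact (g.le_opNorm _).trans (by gcongr; exact A.norm_add_flip_apply_self_le x)
    _ = ‖g‖ * (2 * ‖A‖ * ‖z‖) * ‖x‖ ^ 2 := by ring
    _ < (1 - α) * ‖x‖ ^ 2 := by gcongr

/-- If A is a bounded symmetric bilinear operator with ‖A‖ ≤ (1−α)/(4−2α),
then f(z) = z + A(z,z) is a biholomorphic convex mapping of order α on B. -/
theorem stmt_7 {X : Type*} [NormedAddCommGroup X] [InnerProductSpace ℂ X] [CompleteSpace X]
    (α : ℝ) (hα0 : 0 ≤ α) (hα1 : α < 1)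
    (A : X →L[ℂ] X →L[ℂ] X) (hAsymm : ∀ x y : X, A x y = A y x)
    (hA : ‖A‖ ≤ (1 - α) / (4 - 2 * α)) :
    IsConvexMappingOfOrder (fun z : X => z + A z z) α :=
  stmt_7_general α hα1 A hA
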